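/- Let G be a connected simple graph on a nonempty finite vertex set S of cardinality K, with real Laplacian matrix L. For every initial vector y₀ : S → ℝ, the solution of the linear consensus dynamics ẏ = −L y, given by y(t) = exp(−t L) · y₀ (matrix exponential applied by matrix-vector product), converges as t → ∞ to the consensus vector whose every component equals the average (1/K) Σ_{k∈S} (y₀)_k. -/

import Mathlib

/-!
Diagonalising the positive semidefinite Laplacian, `exp (-t L) = U diag (e^{-t μⱼ}) U*` converges
to a matrix `P` with `L P = 0`, so `y(t) → P y₀ ∈ ker L`. For a connected graph `ker L` consists of
the constant vectors. Since `1ᵀ L = 0`, the row vector `1ᵀ` is fixed by `exp (-t L)`, so the sum of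
the entries of `y(t)` is conserved; this pins the constant down to the average of `y₀`.
-/

open Filter Topology
open scoped Matrix ComplexOrder

theorem Real.tendsto_exp_neg_mul_atTop {μ : ℝ} (hμ : 0 ≤ μ) :
    Tendsto (fun t : ℝ => Real.exp (-t * μ)) atTop (𝓝 (if μ = 0 then 1 else 0)) := by
  rcases hμ.eq_or_lt with rfl | hμ
  · simp
  · rw [if_neg hμ.ne']
    refine (Real.tendsto_exp_neg_atTop_nhds_zero.comp (tendsto_id.atTop_mul_const hμ)).congr ?_
    simp

namespace Matrix

variable {𝕜 n : Type*} [RCLike 𝕜] [Fintype n] [DecidableEq n] {A : Matrix n n 𝕜}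

open scoped Norms.Operator in
theorem exp_mulVec_of_mulVec_eq_zero {v : n → 𝕜} (hv : A *ᵥ v = 0) :
    NormedSpace.exp A *ᵥ v = v := by
  have hterm : ∀ k : ℕ, mulVec.addMonoidHomLeft v ((k.factorial : 𝕜)⁻¹ • A ^ k) =
      if k = 0 then v else 0 := by
    rintro (_ | k)
    · simp [mulVec.addMonoidHomLeft]
    · simp [mulVec.addMonoidHomLeft, pow_succ, smul_mulVec, ← mulVec_mulVec, hv]
  have hseries := (NormedSpace.exp_series_hasSum_exp' (𝕂 := 𝕜) A).map
    (mulVec.addMonoidHomLeft v) (continuous_id.matrix_mulVec continuous_const)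
  simp only [Function.comp_def, hterm] at hseries
  exact hseries.unique (hasSum_ite_eq 0 v)

theorem dotProduct_exp_mulVec_of_transpose_mulVec_eq_zero {u : n → 𝕜} (hu : Aᵀ *ᵥ u = 0)
    (y : n → 𝕜) : u ⬝ᵥ (NormedSpace.exp A *ᵥ y) = u ⬝ᵥ y := by
  rw [dotProduct_mulVec, ← mulVec_transpose, ← exp_transpose, exp_mulVec_of_mulVec_eq_zero hu]

theorem exp_unitary_conj (U : unitary (Matrix n n 𝕜)) (X : Matrix n n 𝕜) :
    NormedSpace.exp ((U : Matrix n n 𝕜) * X * star (U : Matrix n n 𝕜)) =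
      U * NormedSpace.exp X * star (U : Matrix n n 𝕜) :=
  exp_units_conj (Unitary.toUnits U) X

theorem IsHermitian.exp_smul (hA : A.IsHermitian) (t : ℝ) :
    NormedSpace.exp (t • A) = (hA.eigenvectorUnitary : Matrix n n 𝕜) *
      diagonal (fun j => (Real.exp (t * hA.eigenvalues j) : 𝕜)) *
        star (hA.eigenvectorUnitary : Matrix n n 𝕜) := by
  have hdiag : (t : 𝕜) • diagonal (RCLike.ofReal ∘ hA.eigenvalues) =
      diagonal (fun j => ((t * hA.eigenvalues j : ℝ) : 𝕜)) := by
    rw [← diagonal_smul]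
    congr 1
    funext j
    simp
  have hexp : NormedSpace.exp (fun j => ((t * hA.eigenvalues j : ℝ) : 𝕜)) =
      fun j => (Real.exp (t * hA.eigenvalues j) : 𝕜) := by
    rw [Pi.exp_def]
    funext j
    rw [Real.exp_eq_exp_ℝ]
    exact (NormedSpace.algebraMap_exp_comm _).symm
  conv_lhs => rw [RCLike.real_smul_eq_coe_smul (K := 𝕜), hA.spectral_theorem, ← map_smul, hdiag,
    Unitary.conjStarAlgAut_apply, exp_unitary_conj, exp_diagonal, hexp]

theorem PosSemidef.exists_tendsto_exp_neg_smul (hA : A.PosSemidef) :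
    ∃ P, Tendsto (fun t : ℝ => NormedSpace.exp (-(t • A))) atTop (𝓝 P) ∧ A * P = 0 := by
  have hH : A.IsHermitian := hA.isHermitian
  set U := (hH.eigenvectorUnitary : Matrix n n 𝕜)
  set μ := hH.eigenvalues
  set D := diagonal (RCLike.ofReal ∘ μ : n → 𝕜)
  set E := diagonal fun j => ((if μ j = 0 then 1 else 0 : ℝ) : 𝕜)
  refine ⟨U * E * star U, ?_, ?_⟩
  · have hdiag : Tendsto (fun t : ℝ => diagonal (fun j => (Real.exp (-t * μ j) : 𝕜))) atTop
        (𝓝 E) :=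
      (continuous_id.matrix_diagonal.tendsto _).comp <| tendsto_pi_nhds.2 fun j =>
        (RCLike.continuous_ofReal.tendsto _).comp
          (Real.tendsto_exp_neg_mul_atTop (hA.eigenvalues_nonneg j))
    simp_rw [← neg_smul, hH.exp_smul]
    exact (tendsto_const_nhds.mul hdiag).mul tendsto_const_nhds
  · have hU : star U * U = 1 := Unitary.coe_star_mul_self _
    have hDE : D * E = 0 := by
      rw [diagonal_mul_diagonal, ← diagonal_zero]
      congr 1
      funext j
      by_cases hj : μ j = 0 <;> simp [hj]
    calc A * (U * E * star U) = U * D * (star U * U) * E * star U := by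
          conv_lhs => rw [hH.spectral_theorem, Unitary.conjStarAlgAut_apply]
          simp only [Matrix.mul_assoc]
          rfl
      _ = 0 := by rw [hU, Matrix.mul_one, Matrix.mul_assoc U D E, hDE]; simp

end Matrix

namespace SimpleGraph

variable {V : Type*} [Fintype V] [DecidableEq V] {G : SimpleGraph V} [DecidableRel G.Adj]

theorem sum_exp_neg_smul_lapMatrix_mulVec (t : ℝ) (y : V → ℝ) :
    ∑ i, (NormedSpace.exp (-(t • G.lapMatrix ℝ)) *ᵥ y) i = ∑ i, y i := by
  have hker : (-(t • G.lapMatrix ℝ))ᵀ *ᵥ 1 = 0 := by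
    rw [Matrix.transpose_neg, Matrix.transpose_smul, (G.isSymm_lapMatrix ℝ).eq, Matrix.neg_mulVec,
      Matrix.smul_mulVec, Pi.one_def, lapMatrix_mulVec_const_eq_zero, smul_zero, neg_zero]
  simpa only [one_dotProduct] using Matrix.dotProduct_exp_mulVec_of_transpose_mulVec_eq_zero hker y

theorem Connected.eq_average_of_lapMatrix_mulVec_eq_zero (hG : G.Connected) {x : V → ℝ}
    (hx : G.lapMatrix ℝ *ᵥ x = 0) : x = fun _ => (∑ j, x j) / Fintype.card V := by
  have hconst := G.lapMatrix_mulVec_eq_zero_iff_forall_reachable.mp hx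
  have : Nonempty V := hG.nonempty
  funext i
  rw [eq_div_iff (Nat.cast_ne_zero.mpr Fintype.card_ne_zero)]
  calc x i * Fintype.card V = ∑ _j : V, x i := by simp [mul_comm]
    _ = ∑ j, x j := Finset.sum_congr rfl fun j _ => hconst i j (hG.preconnected i j)

end SimpleGraph

open NormedSpace

theorem stmt_9_general {V : Type*} [Fintype V] [DecidableEq V]
    (G : SimpleGraph V) [DecidableRel G.Adj]
    (hconn : G.Connected) (y₀ : V → ℝ) :
    Filter.Tendsto
      (fun t : ℝ => exp (-(t • G.lapMatrix ℝ)) *ᵥ y₀)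
      Filter.atTop
      (nhds (fun _ : V => (∑ k, y₀ k) / (Fintype.card V : ℝ))) := by
  obtain ⟨P, hP, hLP⟩ := (G.posSemidef_lapMatrix ℝ).exists_tendsto_exp_neg_smul
  have hy : Tendsto (fun t : ℝ => exp (-(t • G.lapMatrix ℝ)) *ᵥ y₀) atTop (𝓝 (P *ᵥ y₀)) :=
    ((continuous_id.matrix_mulVec continuous_const).tendsto P).comp hP
  have hsum : ∑ i, (P *ᵥ y₀) i = ∑ i, y₀ i := by
    have hsums := tendsto_finsetSum Finset.univ fun i _ => tendsto_pi_nhds.1 hy i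
    simp only [SimpleGraph.sum_exp_neg_smul_lapMatrix_mulVec] at hsums
    exact tendsto_nhds_unique hsums tendsto_const_nhds
  have hker : G.lapMatrix ℝ *ᵥ (P *ᵥ y₀) = 0 := by
    rw [Matrix.mulVec_mulVec, hLP, Matrix.zero_mulVec]
  rw [← hsum, ← hconn.eq_average_of_lapMatrix_mulVec_eq_zero hker]
  exact hy

/-- For a connected simple graph on a nonempty finite vertex set, the solution
`y(t) = exp(-t L) y₀` of the consensus dynamics `ẏ = -L y` converges, as
`t → ∞`, to the consensus vector all of whose entries equal the average of
the initial entries. -/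
theorem stmt_9 {V : Type*} [Fintype V] [DecidableEq V] [Nonempty V]
    (G : SimpleGraph V) [DecidableRel G.Adj]
    (hconn : G.Connected) (y₀ : V → ℝ) :
    Filter.Tendsto
      (fun t : ℝ => exp (-(t • G.lapMatrix ℝ)) *ᵥ y₀)
      Filter.atTop
      (nhds (fun _ : V => (∑ k, y₀ k) / (Fintype.card V : ℝ))) :=
  stmt_9_general G hconn y₀
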